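/- arXiv:q-alg/9503005 — 2 statements merged into one kernel-verified Lean document; each statement's English description precedes it below -/
import Mathlib

section
/- To any invertible solution of the pentagon relation one associates a pair of mutually dual bialgebras: the structure constants m_{αβ}^γ := tr(G_α G_β G^γ) and μ^{αβ}_γ := tr(F^α F^β F_γ) satisfy the bialgebra compatibility condition, namely for all α, β, ρ, σ ∈ ι: Σ_γ m_{αβ}^γ · μ^{ρσ}_γ = Σ_{ρ₁,σ₁,ρ₂,σ₂} μ^{ρ₁σ₁}_α · μ^{ρ₂σ₂}_β · m_{ρ₁ρ₂}^ρ · m_{σ₁σ₂}^σ. -/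
open Matrix BigOperators

/-- Matrix on `V × V × V` acting as `T` on the first and second factors. -/
def lift12 {k V : Type*} [Semiring k] [DecidableEq V]
    (T : Matrix (V × V) (V × V) k) : Matrix (V × V × V) (V × V × V) k :=
  Matrix.of fun p q =>
    T (p.1, p.2.1) (q.1, q.2.1) * (if p.2.2 = q.2.2 then 1 else 0)

/-- Matrix on `V × V × V` acting as `T` on the first and third factors. -/
def lift13 {k V : Type*} [Semiring k] [DecidableEq V]
    (T : Matrix (V × V) (V × V) k) : Matrix (V × V × V) (V × V × V) k :=
  Matrix.of fun p q =>
    T (p.1, p.2.2) (q.1, q.2.2) * (if p.2.1 = q.2.1 then 1 else 0)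

/-- Matrix on `V × V × V` acting as `T` on the second and third factors. -/
def lift23 {k V : Type*} [Semiring k] [DecidableEq V]
    (T : Matrix (V × V) (V × V) k) : Matrix (V × V × V) (V × V × V) k :=
  Matrix.of fun p q =>
    T (p.2.1, p.2.2) (q.2.1, q.2.2) * (if p.1 = q.1 then 1 else 0)

/-!
Write `S = ∑ α, G α ⊗ F α`. Read as `S₁₂ S₁₃ = S₂₃ S₁₂ S₂₃⁻¹`, the pentagon equation, sliced in
the last two factors against `Fd α ⊗ Fd β`, puts `G α * G β` in the span of the `G γ`; by trace
duality it is then `∑ γ, m_{αβ}^γ • G γ`. Read as `S₁₃ S₂₃ = S₁₂⁻¹ S₂₃ S₁₂` and sliced in the third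
factor against `Fd ω`, it shows `∑ u v, μ^{uv}_ω • G u ⊗ G v = S⁻¹ (1 ⊗ G ω) S`. Conjugation being
multiplicative, these matrices multiply with the same constants `m`, and pairing the product of
two of them with `Gd ρ ⊗ Gd σ` gives the left side of the compatibility condition one way and the
right side the other.
-/

open scoped Kronecker

namespace Matrix

variable {k l m n p ι : Type*} [CommSemiring k]

theorem kronecker_sum [Fintype ι] (A : Matrix l m k) (B : ι → Matrix n p k) :
    A ⊗ₖ (∑ i, B i) = ∑ i, A ⊗ₖ B i :=
  map_sum (kroneckerBilinear (R := k) A) B Finset.univ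

variable [Fintype n] [Fintype p]

theorem trace_kronecker_mul_kronecker [Fintype l] [Fintype m] (A : Matrix l m k)
    (B : Matrix n p k) (C : Matrix m l k) (D : Matrix p n k) :
    trace ((A ⊗ₖ B) * (C ⊗ₖ D)) = trace (A * C) * trace (B * D) := by
  rw [← mul_kronecker_mul, trace_kronecker]

def sliceRight (ψ : Matrix p n k) : Matrix (l × n) (m × p) k →ₗ[k] Matrix l m k where
  toFun X := of fun a b => ∑ c, ∑ d, X (a, c) (b, d) * ψ d c
  map_add' X Y := by ext; simp [add_mul, Finset.sum_add_distrib]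
  map_smul' r X := by ext; simp [Finset.mul_sum, mul_assoc]

theorem sliceRight_kronecker (ψ : Matrix p n k) (A : Matrix l m k) (B : Matrix n p k) :
    sliceRight ψ (A ⊗ₖ B) = trace (B * ψ) • A := by
  ext a b
  simp [sliceRight, trace, mul_apply, Finset.mul_sum, mul_comm, mul_left_comm]

end Matrix

open Matrix

section Lifts

variable {k V : Type*} [CommSemiring k] [DecidableEq V]

theorem lift12_sum {ι : Type*} [Fintype ι] (T : ι → Matrix (V × V) (V × V) k) :
    lift12 (∑ i, T i) = ∑ i, lift12 (T i) := by
  ext ⟨a, b, c⟩ ⟨d, e, f⟩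
  simp [lift12, Matrix.sum_apply]

theorem lift13_sum {ι : Type*} [Fintype ι] (T : ι → Matrix (V × V) (V × V) k) :
    lift13 (∑ i, T i) = ∑ i, lift13 (T i) := by
  ext ⟨a, b, c⟩ ⟨d, e, f⟩
  simp [lift13, Matrix.sum_apply]

theorem lift12_kronecker (A B : Matrix V V k) : lift12 (A ⊗ₖ B) = A ⊗ₖ (B ⊗ₖ 1) := by
  ext ⟨a, b, c⟩ ⟨d, e, f⟩
  simp [lift12, one_apply]

theorem lift13_kronecker (A B : Matrix V V k) : lift13 (A ⊗ₖ B) = A ⊗ₖ (1 ⊗ₖ B) := by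
  ext ⟨a, b, c⟩ ⟨d, e, f⟩
  simp [lift13, one_apply]

theorem lift23_eq_one_kronecker (T : Matrix (V × V) (V × V) k) : lift23 T = 1 ⊗ₖ T := by
  ext ⟨a, b, c⟩ ⟨d, e, f⟩
  simp [lift23, one_apply]

theorem reindex_lift12 (T : Matrix (V × V) (V × V) k) :
    reindex (Equiv.prodAssoc V V V).symm (Equiv.prodAssoc V V V).symm (lift12 T) = T ⊗ₖ 1 := by
  ext ⟨⟨a, b⟩, c⟩ ⟨⟨d, e⟩, f⟩
  simp [lift12, one_apply]

theorem reindex_lift13_kronecker (A B : Matrix V V k) :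
    reindex (Equiv.prodAssoc V V V).symm (Equiv.prodAssoc V V V).symm (lift13 (A ⊗ₖ B)) =
      (A ⊗ₖ 1) ⊗ₖ B := by
  ext ⟨⟨a, b⟩, c⟩ ⟨⟨d, e⟩, f⟩
  simp [lift13, one_apply]

theorem reindex_lift23_kronecker (A B : Matrix V V k) :
    reindex (Equiv.prodAssoc V V V).symm (Equiv.prodAssoc V V V).symm (lift23 (A ⊗ₖ B)) =
      (1 ⊗ₖ A) ⊗ₖ B := by
  ext ⟨⟨a, b⟩, c⟩ ⟨⟨d, e⟩, f⟩
  simp [lift23, one_apply]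

end Lifts

section DualFamilies

variable {k V ι : Type*} [CommSemiring k] [Fintype V] [Fintype ι] [DecidableEq ι]
  {G Gd : ι → Matrix V V k}

theorem trace_sum_smul_mul_of_dual (hdual : ∀ α β, (G α * Gd β).trace = if α = β then 1 else 0)
    (c : ι → k) (γ : ι) : trace ((∑ τ, c τ • G τ) * Gd γ) = c γ := by
  simp [Finset.sum_mul, trace_sum, hdual]

theorem eq_sum_trace_mul_smul_of_mem_span
    (hdual : ∀ α β, (G α * Gd β).trace = if α = β then 1 else 0)
    {M : Matrix V V k} (hM : M ∈ Submodule.span k (Set.range G)) :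
    M = ∑ γ, trace (M * Gd γ) • G γ := by
  obtain ⟨c, rfl⟩ := (Submodule.mem_span_range_iff_exists_fun k).mp hM
  simp only [trace_sum_smul_mul_of_dual hdual]

end DualFamilies

section CoproductRep

variable {k V ι : Type*} [CommSemiring k] [Fintype V] [Fintype ι]

/-- `(π ⊗ π) (Δ eω)`, where `Δ` is the coproduct with structure constants `μ` and `π eα = G α`. -/
def coproductRep (F Fd G : ι → Matrix V V k) (ω : ι) : Matrix (V × V) (V × V) k :=
  ∑ u, ∑ v, (F u * F v * Fd ω).trace • (G u ⊗ₖ G v)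

theorem trace_coproductRep_mul_kronecker [DecidableEq ι] {F Fd G Gd : ι → Matrix V V k}
    (hGdual : ∀ α β, (G α * Gd β).trace = if α = β then 1 else 0) (γ ρ σ : ι) :
    trace (coproductRep F Fd G γ * (Gd ρ ⊗ₖ Gd σ)) = (F ρ * F σ * Fd γ).trace := by
  simp [coproductRep, Finset.sum_mul, trace_sum, smul_mul, trace_kronecker_mul_kronecker, hGdual]

theorem trace_coproductRep_mul_coproductRep_mul_kronecker (F Fd G Gd : ι → Matrix V V k)
    (α β ρ σ : ι) :
    trace (coproductRep F Fd G α * coproductRep F Fd G β * (Gd ρ ⊗ₖ Gd σ)) =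
      ∑ ρ₁, ∑ σ₁, ∑ ρ₂, ∑ σ₂, (F ρ₁ * F σ₁ * Fd α).trace * (F ρ₂ * F σ₂ * Fd β).trace *
        (G ρ₁ * G ρ₂ * Gd ρ).trace * (G σ₁ * G σ₂ * Gd σ).trace := by
  have hprod : coproductRep F Fd G α * coproductRep F Fd G β =
      ∑ ρ₁, ∑ σ₁, ∑ ρ₂, ∑ σ₂, ((F ρ₁ * F σ₁ * Fd α).trace * (F ρ₂ * F σ₂ * Fd β).trace) •
        ((G ρ₁ * G ρ₂) ⊗ₖ (G σ₁ * G σ₂)) := by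
    rw [coproductRep]
    simp only [Finset.sum_mul]
    simp only [coproductRep, Finset.mul_sum, smul_mul_smul_comm, mul_kronecker_mul]
  rw [hprod]
  simp only [Finset.sum_mul, trace_sum, smul_mul, trace_smul, trace_kronecker_mul_kronecker,
    smul_eq_mul, mul_assoc]

end CoproductRep

section Pentagon

variable {k V ι : Type*} [CommRing k] [Fintype V] [DecidableEq V] [Fintype ι] [DecidableEq ι]
  {S : Matrix (V × V) (V × V) k} {G F Fd : ι → Matrix V V k}

theorem mul_mem_span_of_pentagon (hS : IsUnit S)
    (hpent : lift12 S * lift13 S * lift23 S = lift23 S * lift12 S)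
    (hdecomp : S = ∑ τ, G τ ⊗ₖ F τ)
    (hFdual : ∀ α β, (Fd α * F β).trace = if α = β then 1 else 0) (α β : ι) :
    G α * G β ∈ Submodule.span k (Set.range G) := by
  have h12 : lift12 S = ∑ τ, G τ ⊗ₖ (F τ ⊗ₖ 1) := by
    rw [hdecomp, lift12_sum]
    simp only [lift12_kronecker]
  have hconj : lift12 S * lift13 S = lift23 S * lift12 S * lift23 S⁻¹ := by
    rw [← hpent, mul_assoc _ (lift23 S), lift23_eq_one_kronecker, lift23_eq_one_kronecker,
      ← mul_kronecker_mul, one_mul, mul_nonsing_inv _ ((isUnit_iff_isUnit_det S).mp hS),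
      one_kronecker_one, mul_one]
  have hleft : lift12 S * lift13 S = ∑ τ, ∑ υ, (G τ * G υ) ⊗ₖ (F τ ⊗ₖ F υ) := by
    rw [h12, hdecomp, lift13_sum, Finset.sum_mul_sum]
    simp only [lift13_kronecker, ← mul_kronecker_mul, mul_one, one_mul]
  have hright : lift23 S * lift12 S * lift23 S⁻¹ = ∑ τ, G τ ⊗ₖ (S * (F τ ⊗ₖ 1) * S⁻¹) := by
    rw [h12, lift23_eq_one_kronecker, lift23_eq_one_kronecker, Finset.mul_sum, Finset.sum_mul]
    simp only [← mul_kronecker_mul, mul_one, one_mul]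
  refine (Submodule.mem_span_range_iff_exists_fun k).mpr
    ⟨fun τ => trace (S * (F τ ⊗ₖ 1) * S⁻¹ * (Fd α ⊗ₖ Fd β)), ?_⟩
  have hslice := congrArg (sliceRight (Fd α ⊗ₖ Fd β)) hconj
  rw [hleft, hright] at hslice
  simpa [eq_comm, sliceRight_kronecker, trace_kronecker_mul_kronecker, trace_mul_comm (F _) (Fd _),
    hFdual] using hslice

theorem coproductRep_eq_conj_of_pentagon (hS : IsUnit S)
    (hpent : lift12 S * lift13 S * lift23 S = lift23 S * lift12 S)
    (hdecomp : S = ∑ τ, G τ ⊗ₖ F τ)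
    (hFdual : ∀ α β, (Fd α * F β).trace = if α = β then 1 else 0) (ω : ι) :
    coproductRep F Fd G ω = S⁻¹ * (1 ⊗ₖ G ω) * S := by
  set r := reindexAlgEquiv k k (Equiv.prodAssoc V V V).symm
  have h13 : r (lift13 S) = ∑ τ, (G τ ⊗ₖ 1) ⊗ₖ F τ := by
    rw [hdecomp, lift13_sum, map_sum]
    simp only [r, coe_reindexAlgEquiv, reindex_lift13_kronecker]
  have h23 : r (lift23 S) = ∑ τ, (1 ⊗ₖ G τ) ⊗ₖ F τ := by
    rw [hdecomp, lift23_eq_one_kronecker, kronecker_sum, map_sum]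
    simp only [r, coe_reindexAlgEquiv, ← lift23_eq_one_kronecker, reindex_lift23_kronecker]
  have hconj : r (lift13 S) * r (lift23 S) = (S⁻¹ ⊗ₖ 1) * r (lift23 S) * (S ⊗ₖ 1) := by
    have h := congrArg (fun X => (S⁻¹ ⊗ₖ 1) * r X) hpent
    simp only [map_mul, r, coe_reindexAlgEquiv, reindex_lift12, ← mul_assoc, ← mul_kronecker_mul,
      nonsing_inv_mul _ ((isUnit_iff_isUnit_det S).mp hS), one_kronecker_one, mul_one,
      one_mul] at h
    exact h
  rw [h13, h23, Finset.sum_mul_sum, Finset.mul_sum, Finset.sum_mul] at hconj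
  simp only [← mul_kronecker_mul, mul_one, one_mul] at hconj
  have hslice := congrArg (sliceRight (Fd ω)) hconj
  simpa [coproductRep, sliceRight_kronecker, trace_mul_comm (F _) (Fd _), hFdual] using hslice

theorem coproductRep_mul_of_pentagon (hS : IsUnit S)
    (hpent : lift12 S * lift13 S * lift23 S = lift23 S * lift12 S)
    (hdecomp : S = ∑ τ, G τ ⊗ₖ F τ)
    (hFdual : ∀ α β, (Fd α * F β).trace = if α = β then 1 else 0) {α β : ι} {c : ι → k}
    (hmul : G α * G β = ∑ γ, c γ • G γ) :
    coproductRep F Fd G α * coproductRep F Fd G β = ∑ γ, c γ • coproductRep F Fd G γ := by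
  have hdet := (isUnit_iff_isUnit_det S).mp hS
  simp only [coproductRep_eq_conj_of_pentagon hS hpent hdecomp hFdual, mul_assoc,
    mul_nonsing_inv_cancel_left _ _ hdet]
  simp only [← mul_assoc, ← mul_kronecker_mul, mul_one, hmul, kronecker_sum, kronecker_smul,
    Finset.mul_sum, Finset.sum_mul, Matrix.mul_smul, Matrix.smul_mul]

end Pentagon

theorem pentagon_bialgebra_compatibility
    {k V ι : Type*} [Field k] [Fintype V] [DecidableEq V] [Fintype ι] [DecidableEq ι]
    (S : Matrix (V × V) (V × V) k)
    (hSinv : IsUnit S)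
    (hpent : lift12 S * lift13 S * lift23 S = lift23 S * lift12 S)
    (G F Gd Fd : ι → Matrix V V k)
    (hdecomp : ∀ a b c d, S (a, b) (c, d) = ∑ α, G α a c * F α b d)
    (hFdual : ∀ α β, (Fd α * F β).trace = if α = β then (1 : k) else 0)
    (hGdual : ∀ α β, (G α * Gd β).trace = if α = β then (1 : k) else 0) :
    ∀ α β ρ σ, ∑ γ, (G α * G β * Gd γ).trace * (F ρ * F σ * Fd γ).trace = ∑ ρ₁, ∑ σ₁, ∑ ρ₂, ∑ σ₂, (F ρ₁ * F σ₁ * Fd α).trace * (F ρ₂ * F σ₂ * Fd β).trace * (G ρ₁ * G ρ₂ * Gd ρ).trace * (G σ₁ * G σ₂ * Gd σ).trace := by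
  intro α β ρ σ
  have hS : S = ∑ τ, G τ ⊗ₖ F τ := by
    ext ⟨a, b⟩ ⟨c, d⟩
    simp [hdecomp, Matrix.sum_apply]
  have hmul : G α * G β = ∑ γ, (G α * G β * Gd γ).trace • G γ :=
    eq_sum_trace_mul_smul_of_mem_span hGdual (mul_mem_span_of_pentagon hSinv hpent hS hFdual α β)
  calc ∑ γ, (G α * G β * Gd γ).trace * (F ρ * F σ * Fd γ).trace
      = ∑ γ, (G α * G β * Gd γ).trace * trace (coproductRep F Fd G γ * (Gd ρ ⊗ₖ Gd σ)) := by
        simp only [trace_coproductRep_mul_kronecker hGdual]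
    _ = trace (coproductRep F Fd G α * coproductRep F Fd G β * (Gd ρ ⊗ₖ Gd σ)) := by
        rw [coproductRep_mul_of_pentagon hSinv hpent hS hFdual hmul]
        simp [Finset.sum_mul, trace_sum]
    _ = _ := trace_coproductRep_mul_coproductRep_mul_kronecker F Fd G Gd α β ρ σ
end

section
/- First mixed pentagon relation: S'₁₂ · S'₁₃ · S₂₃ = S₂₃ · S'₁₂ as matrices on V × V × V, where S' := (S⁻¹)^{t₁}. -/
open Matrix BigOperators

/-- Partial transposition in the first factor: `T^{t₁}_{(a,b),(c,d)} = T_{(c,b),(a,d)}`. -/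
def pt1 {k V : Type*} (T : Matrix (V × V) (V × V) k) : Matrix (V × V) (V × V) k :=
  Matrix.of fun p q => T (q.1, p.2) (p.1, q.2)

/-- Partial transposition in the second factor: `T^{t₂}_{(a,b),(c,d)} = T_{(a,d),(c,b)}`. -/
def pt2 {k V : Type*} (T : Matrix (V × V) (V × V) k) : Matrix (V × V) (V × V) k :=
  Matrix.of fun p q => T (p.1, q.2) (q.1, p.2)

section Aux
variable {k V : Type*} [Field k] [Fintype V] [DecidableEq V]

/-- Partial transpose in the first factor on the triple space. -/
def theta1 (T : Matrix (V × V × V) (V × V × V) k) : Matrix (V × V × V) (V × V × V) k :=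
  Matrix.of fun p q => T (q.1, p.2) (p.1, q.2)

lemma lift12_mul (A B : Matrix (V × V) (V × V) k) :
    lift12 (A * B) = lift12 A * lift12 B := by
  ext ⟨a, b, c⟩ ⟨d, e, f⟩
  simp [lift12, Matrix.mul_apply, Fintype.sum_prod_type, mul_ite, ite_mul,
    Finset.mul_sum, Finset.sum_mul]

lemma lift13_mul (A B : Matrix (V × V) (V × V) k) :
    lift13 (A * B) = lift13 A * lift13 B := by
  ext ⟨a, b, c⟩ ⟨d, e, f⟩
  simp [lift13, Matrix.mul_apply, Fintype.sum_prod_type, mul_ite, ite_mul,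
    Finset.mul_sum, Finset.sum_mul]

lemma lift23_mul (A B : Matrix (V × V) (V × V) k) :
    lift23 (A * B) = lift23 A * lift23 B := by
  ext ⟨a, b, c⟩ ⟨d, e, f⟩
  simp [lift23, Matrix.mul_apply, Fintype.sum_prod_type, mul_ite, ite_mul,
    Finset.mul_sum, Finset.sum_mul]

lemma lift12_one : lift12 (1 : Matrix (V × V) (V × V) k) = 1 := by
  ext ⟨a, b, c⟩ ⟨d, e, f⟩
  simp [lift12, Matrix.one_apply, Prod.ext_iff, ite_and]
  aesop

lemma lift13_one : lift13 (1 : Matrix (V × V) (V × V) k) = 1 := by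
  ext ⟨a, b, c⟩ ⟨d, e, f⟩
  simp [lift13, Matrix.one_apply, Prod.ext_iff, ite_and]
  aesop

lemma lift23_one : lift23 (1 : Matrix (V × V) (V × V) k) = 1 := by
  ext ⟨a, b, c⟩ ⟨d, e, f⟩
  simp [lift23, Matrix.one_apply, Prod.ext_iff, ite_and] <;> aesop

lemma theta1_lift12 (A : Matrix (V × V) (V × V) k) :
    theta1 (lift12 A) = lift12 (pt1 A) := by
  ext ⟨a, b, c⟩ ⟨d, e, f⟩
  simp [theta1, lift12, pt1]

lemma theta1_lift23_mul (X : Matrix (V × V) (V × V) k)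
    (M : Matrix (V × V × V) (V × V × V) k) :
    theta1 (lift23 X * M) = lift23 X * theta1 M := by
  ext ⟨a, b, c⟩ ⟨d, e, f⟩
  simp only [theta1, lift23, Matrix.mul_apply, Matrix.of_apply, Fintype.sum_prod_type,
    ite_mul, mul_ite, mul_one, mul_zero, one_mul, zero_mul]
  simp

lemma theta1_mul_lift23 (X : Matrix (V × V) (V × V) k)
    (M : Matrix (V × V × V) (V × V × V) k) :
    theta1 (M * lift23 X) = theta1 M * lift23 X := by
  ext ⟨a, b, c⟩ ⟨d, e, f⟩
  simp only [theta1, lift23, Matrix.mul_apply, Matrix.of_apply, Fintype.sum_prod_type,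
    ite_mul, mul_ite, mul_one, mul_zero, one_mul, zero_mul]
  simp

lemma theta1_lift13_mul_lift12 (B A : Matrix (V × V) (V × V) k) :
    theta1 (lift13 B * lift12 A) = lift12 (pt1 A) * lift13 (pt1 B) := by
  ext ⟨a, b, c⟩ ⟨d, e, f⟩
  simp only [theta1, lift13, lift12, pt1, Matrix.mul_apply, Matrix.of_apply,
    Fintype.sum_prod_type, ite_mul, mul_ite, mul_one, mul_zero, one_mul, zero_mul]
  simp [mul_comm]

end Aux

theorem mixed_pentagon_one
    {k V : Type*} [Field k] [Fintype V] [DecidableEq V]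
    (S : Matrix (V × V) (V × V) k)
    (hSinv : IsUnit S) (hSt2inv : IsUnit (pt2 S))
    (hpent : lift12 S * lift13 S * lift23 S = lift23 S * lift12 S) :
    lift12 (pt1 S⁻¹) * lift13 (pt1 S⁻¹) * lift23 S = lift23 S * lift12 (pt1 S⁻¹) := by
  have hdet : IsUnit S.det := (Matrix.isUnit_iff_isUnit_det S).mp hSinv
  have hSi : S⁻¹ * S = 1 := Matrix.nonsing_inv_mul S hdet
  have hSi' : S * S⁻¹ = 1 := Matrix.mul_nonsing_inv S hdet
  set A := lift12 S
  set B := lift13 S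
  set C := lift23 S
  set A' := lift12 S⁻¹ with hA'
  set B' := lift13 S⁻¹ with hB'
  set C' := lift23 S⁻¹ with hC'
  have hAA : A' * A = 1 := by rw [hA', ← lift12_mul, hSi, lift12_one]
  have hAA' : A * A' = 1 := by rw [hA', ← lift12_mul, hSi', lift12_one]
  have hBB : B' * B = 1 := by rw [hB', ← lift13_mul, hSi, lift13_one]
  have hCC : C' * C = 1 := by rw [hC', ← lift23_mul, hSi, lift23_one]
  have hCC' : C * C' = 1 := by rw [hC', ← lift23_mul, hSi', lift23_one]
  -- from pentagon: C' * B' * A' = A' * C'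
  have key : B' * A' = C * A' * C' := by
    have h1 : C' * B' * A' = A' * C' := by
      calc C' * B' * A' = C' * B' * A' * ((C * A) * (A' * C')) := by
            rw [show (C * A) * (A' * C') = C * (A * A') * C' by noncomm_ring, hAA',
              mul_one, hCC', mul_one]
        _ = C' * B' * (A' * (A * B * C)) * (A' * C') := by rw [← hpent]; noncomm_ring
        _ = C' * B' * (B * C) * (A' * C') := by rw [show A' * (A * B * C) = (A' * A) * (B * C) by noncomm_ring, hAA, one_mul]
        _ = C' * C * (A' * C') := by rw [show C' * B' * (B * C) = C' * ((B' * B) * C) by noncomm_ring, hBB, one_mul]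
        _ = A' * C' := by rw [hCC, one_mul]
    calc B' * A' = C * (C' * B' * A') := by rw [show C * (C' * B' * A') = (C * C') * (B' * A') by noncomm_ring, hCC', one_mul]
      _ = C * (A' * C') := by rw [h1]
      _ = C * A' * C' := by noncomm_ring
  have hth : theta1 (B' * A') = theta1 (C * (A' * C')) := by
    rw [key]; noncomm_ring
  rw [hB', hA', theta1_lift13_mul_lift12] at hth
  rw [show C * (A' * C') = C * A' * C' by noncomm_ring] at hth
  rw [hC', theta1_mul_lift23, theta1_lift23_mul, hA', theta1_lift12] at hth
  rw [hth]
  calc lift23 S * lift12 (pt1 S⁻¹) * lift23 S⁻¹ * lift23 S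
      = lift23 S * lift12 (pt1 S⁻¹) * (lift23 S⁻¹ * lift23 S) := by noncomm_ring
    _ = lift23 S * lift12 (pt1 S⁻¹) := by rw [← lift23_mul, hSi, lift23_one, mul_one]
end
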